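/- arXiv:1201.5991 — 2 statements merged into one kernel-verified Lean document; each statement's English description precedes it below -/
import Mathlib

section
/- Let K be symmetric positive definite, C of full row rank, Ψ the coarse basis solving the saddle point problem. Then every vector u ∈ ℝⁿ decomposes uniquely as u = Ψ(Cu) + w with Cw = 0, and the decomposition is K-orthogonal: uᵀKu = (Cu)ᵀ(ΨᵀKΨ)(Cu) + wᵀKw. -/
open Matrix

theorem bddc_energy_orthogonal_decomposition
    (n m : ℕ) (K : Matrix (Fin n) (Fin n) ℝ) (C : Matrix (Fin m) (Fin n) ℝ)
    (Ψ : Matrix (Fin n) (Fin m) ℝ) (Λ : Matrix (Fin m) (Fin m) ℝ)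
    (hK : K.PosDef) (hC : C.rank = m)
    (h1 : K * Ψ + Cᵀ * Λ = 0) (h2 : C * Ψ = 1) :
    ∀ u : Fin n → ℝ,
      (∃! w : Fin n → ℝ, u = Ψ.mulVec (C.mulVec u) + w ∧ C.mulVec w = 0) ∧
      (∀ w : Fin n → ℝ, u = Ψ.mulVec (C.mulVec u) + w → C.mulVec w = 0 →
        u ⬝ᵥ K.mulVec u =
          (C.mulVec u) ⬝ᵥ (Ψᵀ * K * Ψ).mulVec (C.mulVec u) + w ⬝ᵥ K.mulVec w) := by
  intro u
  have hKΨ : K * Ψ = -(Cᵀ * Λ) := eq_neg_of_add_eq_zero_left h1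
  have hKs : Kᵀ = K := by simpa using hK.1.eq
  constructor
  · refine ⟨u - Ψ.mulVec (C.mulVec u), ⟨by abel, ?_⟩, ?_⟩
    · have h3 : C.mulVec (Ψ.mulVec (C.mulVec u)) = C.mulVec u := by
        rw [Matrix.mulVec_mulVec, h2, Matrix.one_mulVec]
      rw [Matrix.mulVec_sub, h3]
      simp
    · intro w ⟨hw, _⟩
      exact eq_sub_of_add_eq' hw.symm
  · intro w hw hCw
    have cross : w ⬝ᵥ K.mulVec (Ψ.mulVec (C.mulVec u)) = 0 := by
      rw [Matrix.mulVec_mulVec, hKΨ, Matrix.neg_mulVec, dotProduct_neg,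
        ← Matrix.mulVec_mulVec, Matrix.dotProduct_mulVec, Matrix.vecMul_transpose, hCw]
      simp
    have cross2 : (Ψ.mulVec (C.mulVec u)) ⬝ᵥ K.mulVec w = 0 := by
      rw [Matrix.dotProduct_mulVec, ← Matrix.mulVec_transpose, hKs, dotProduct_comm]
      exact cross
    have key : Ψ.mulVec (C.mulVec u) ⬝ᵥ K.mulVec (Ψ.mulVec (C.mulVec u)) =
        C.mulVec u ⬝ᵥ (Ψᵀ * K * Ψ).mulVec (C.mulVec u) := by
      symm
      rw [← Matrix.mulVec_mulVec, ← Matrix.mulVec_mulVec, Matrix.dotProduct_mulVec,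
        Matrix.vecMul_transpose]
    conv_lhs => rw [hw]
    rw [Matrix.mulVec_add, add_dotProduct, dotProduct_add, dotProduct_add,
      cross, cross2, key]
    ring
end

section
/- Let T = Z(ZᵀKZ)⁻¹Zᵀ be the subdomain correction operator and P = ΨC where Ψ solves the coarse saddle point problem (KΨ + CᵀΛ = 0, CΨ = I). Then TK + P = I on ℝⁿ, i.e., the coarse interpolation and the K-harmonic subdomain correction together reproduce the identity: for every u, u = Ψ(Cu) + T(Ku). -/
/-!
Write `T = Z (Zᵀ K Z)⁻¹ Zᵀ`. Then `T K Z = Z`, and `T K Ψ = 0` because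
`Zᵀ K Ψ = -(C Z)ᵀ Λ = 0`. Since `C Ψ = 1`, the matrix `1 - Ψ C` maps into `ker C`, which equals
`range Z` by a dimension count. Hence `T K = T K (1 - Ψ C) = 1 - Ψ C`. Injectivity of `Z` makes `Zᵀ K Z` positive definite, so the
inverse is a genuine one.
-/

open Matrix

namespace Matrix

variable {l m n R : Type*}

theorem rank_eq_card_of_mul_eq_one [Fintype m] [Fintype n] [CommSemiring R] [StrongRankCondition R]
    [DecidableEq m] {C : Matrix m n R} {Ψ : Matrix n m R} (h : C * Ψ = 1) :
    C.rank = Fintype.card m :=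
  le_antisymm C.rank_le_card_height (by simpa [h, rank_one] using C.rank_mul_le_left Ψ)

theorem mulVec_injective_of_rank_eq_card [Fintype n] [Field R] {A : Matrix m n R}
    (h : A.rank = Fintype.card n) : Function.Injective A.mulVec := by
  have hker : Module.finrank R (LinearMap.ker A.mulVecLin) = 0 := by
    have := A.mulVecLin.finrank_range_add_finrank_ker
    rw [← rank, h, Module.finrank_fintype_fun_eq_card] at this
    omega
  rw [← coe_mulVecLin, ← LinearMap.ker_eq_bot]
  exact Submodule.finrank_eq_zero.mp hker

theorem range_mulVecLin_eq_ker_of_mul_eq_zero [Fintype m] [Fintype n] [Field R] [Finite l]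
    {C : Matrix l m R} {Z : Matrix m n R} (hCZ : C * Z = 0)
    (hrank : C.rank + Z.rank = Fintype.card m) :
    LinearMap.range Z.mulVecLin = LinearMap.ker C.mulVecLin := by
  refine Submodule.eq_of_le_of_finrank_le ?_ ?_
  · rw [LinearMap.range_le_ker_iff, ← mulVecLin_mul, hCZ, mulVecLin_zero]
  · have := C.mulVecLin.finrank_range_add_finrank_ker
    rw [← rank, Module.finrank_fintype_fun_eq_card] at this
    rw [← rank]
    omega

theorem add_mul_eq_one_of_ker_le_range [Fintype l] [Fintype m] [Fintype n] [CommRing R]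
    [DecidableEq m] [DecidableEq n] {A : Matrix n n R} {Z : Matrix n l R} {Ψ : Matrix n m R}
    {C : Matrix m n R} (hAZ : A * Z = Z) (hAΨ : A * Ψ = 0) (hCΨ : C * Ψ = 1)
    (hker : LinearMap.ker C.mulVecLin ≤ LinearMap.range Z.mulVecLin) :
    A + Ψ * C = 1 := by
  refine ext_iff_mulVec.mpr fun u => ?_
  obtain ⟨w, hw⟩ : u - Ψ *ᵥ C *ᵥ u ∈ LinearMap.range Z.mulVecLin := by
    refine hker ?_
    simp only [LinearMap.mem_ker, mulVecLin_apply, mulVec_sub, mulVec_mulVec, ← Matrix.mul_assoc,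
      hCΨ, Matrix.one_mul, sub_self]
  have hAu : A *ᵥ u = u - Ψ *ᵥ C *ᵥ u := by
    calc A *ᵥ u = A *ᵥ (u - Ψ *ᵥ C *ᵥ u) + A *ᵥ Ψ *ᵥ C *ᵥ u := by
          rw [← mulVec_add, sub_add_cancel]
      _ = u - Ψ *ᵥ C *ᵥ u := by
          rw [← hw, mulVecLin_apply, mulVec_mulVec, hAZ, mulVec_mulVec, hAΨ, zero_mulVec,
            add_zero]
  rw [add_mulVec, hAu, ← mulVec_mulVec, one_mulVec, sub_add_cancel]

end Matrix

theorem bddc_splitting_identity_general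
    (n m : ℕ) (K : Matrix (Fin n) (Fin n) ℝ) (C : Matrix (Fin m) (Fin n) ℝ)
    (Z : Matrix (Fin n) (Fin (n - m)) ℝ)
    (Ψ : Matrix (Fin n) (Fin m) ℝ) (Λ : Matrix (Fin m) (Fin m) ℝ)
    (hK : K.PosDef)
    (hCZ : C * Z = 0) (hZ : Z.rank = n - m)
    (h1 : K * Ψ + Cᵀ * Λ = 0) (h2 : C * Ψ = 1) :
    (Z * (Zᵀ * K * Z)⁻¹ * Zᵀ) * K + Ψ * C = 1 ∧
    ∀ u : Fin n → ℝ,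
      u = Ψ.mulVec (C.mulVec u) +
          (Z * (Zᵀ * K * Z)⁻¹ * Zᵀ).mulVec (K.mulVec u) := by
  have hC : C.rank = m := by simpa using rank_eq_card_of_mul_eq_one h2
  have hZinj : Function.Injective Z.mulVec :=
    mulVec_injective_of_rank_eq_card (by simpa using hZ)
  have hMpd : (Zᵀ * K * Z).PosDef := by simpa using hK.conjTranspose_mul_mul_same hZinj
  have hM : IsUnit (Zᵀ * K * Z).det := hMpd.det_pos.ne'.isUnit
  have hTKZ : Z * (Zᵀ * K * Z)⁻¹ * Zᵀ * K * Z = Z :=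
    calc Z * (Zᵀ * K * Z)⁻¹ * Zᵀ * K * Z = Z * ((Zᵀ * K * Z)⁻¹ * (Zᵀ * K * Z)) := by
          simp only [Matrix.mul_assoc]
      _ = Z := by rw [nonsing_inv_mul _ hM, Matrix.mul_one]
  have hZKΨ : Zᵀ * (K * Ψ) = 0 := by
    rw [eq_neg_of_add_eq_zero_left h1, Matrix.mul_neg, ← Matrix.mul_assoc, ← transpose_mul, hCZ,
      transpose_zero, Matrix.zero_mul, neg_zero]
  have hTKΨ : Z * (Zᵀ * K * Z)⁻¹ * Zᵀ * K * Ψ = 0 := by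
    simp only [Matrix.mul_assoc, hZKΨ, Matrix.mul_zero]
  have hker : LinearMap.ker C.mulVecLin ≤ LinearMap.range Z.mulVecLin :=
    (range_mulVecLin_eq_ker_of_mul_eq_zero hCZ (by simp [hC, hZ, hC ▸ C.rank_le_width])).ge
  have hsplit := add_mul_eq_one_of_ker_le_range hTKZ hTKΨ h2 hker
  refine ⟨hsplit, fun u => ?_⟩
  conv_lhs => rw [← one_mulVec u, ← hsplit]
  rw [add_mulVec, mulVec_mulVec, mulVec_mulVec, add_comm]

theorem bddc_splitting_identity
    (n m : ℕ) (K : Matrix (Fin n) (Fin n) ℝ) (C : Matrix (Fin m) (Fin n) ℝ)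
    (Z : Matrix (Fin n) (Fin (n - m)) ℝ)
    (Ψ : Matrix (Fin n) (Fin m) ℝ) (Λ : Matrix (Fin m) (Fin m) ℝ)
    (hK : K.PosDef) (hC : C.rank = m)
    (hCZ : C * Z = 0) (hZ : Z.rank = n - m)
    (h1 : K * Ψ + Cᵀ * Λ = 0) (h2 : C * Ψ = 1) :
    (Z * (Zᵀ * K * Z)⁻¹ * Zᵀ) * K + Ψ * C = 1 ∧
    ∀ u : Fin n → ℝ,
      u = Ψ.mulVec (C.mulVec u) +
          (Z * (Zᵀ * K * Z)⁻¹ * Zᵀ).mulVec (K.mulVec u) :=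
  bddc_splitting_identity_general n m K C Z Ψ Λ hK hCZ hZ h1 h2
end
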